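/- arXiv:1611.07358 — 7 statements merged into one kernel-verified Lean document; each statement's English description precedes it below -/
import Mathlib

section
/- Let A, B : ℝ → ℝ be continuous functions and define Ψ : ℝ² → ℝ² by Ψ(t, ζ) = (t, (A(ζ)/2)·t² + B(ζ)·t + ζ). If Ψ is injective, then for all ζ, ζ' ∈ ℝ, either A(ζ) = A(ζ') and B(ζ) = B(ζ'), or 2·(A(ζ) − A(ζ'))·(ζ − ζ') > (B(ζ) − B(ζ'))². -/
theorem stmt_0 (A B : ℝ → ℝ) (hA : Continuous A) (hB : Continuous B)
    (Ψ : ℝ × ℝ → ℝ × ℝ)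
    (hΨ : ∀ t ζ : ℝ, Ψ (t, ζ) = (t, A ζ / 2 * t ^ 2 + B ζ * t + ζ))
    (hinj : Function.Injective Ψ) :
    ∀ ζ ζ' : ℝ, (A ζ = A ζ' ∧ B ζ = B ζ') ∨
      2 * (A ζ - A ζ') * (ζ - ζ') > (B ζ - B ζ') ^ 2 := by
  intro ζ ζ'
  by_cases hz : ζ = ζ'
  · exact Or.inl ⟨by rw [hz], by rw [hz]⟩
  set a := A ζ - A ζ' with ha
  set b := B ζ - B ζ' with hb
  set c := ζ - ζ' with hc
  have hroot : ∀ t : ℝ, a / 2 * t ^ 2 + b * t + c ≠ 0 := by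
    intro t ht
    apply hz
    have hΨeq : Ψ (t, ζ) = Ψ (t, ζ') := by
      rw [hΨ, hΨ]
      refine Prod.ext rfl ?_
      simp only [ha, hb, hc] at ht
      ring_nf at ht ⊢
      linarith
    exact (Prod.mk.injEq _ _ _ _).mp (hinj hΨeq) |>.2
  have hc0 : c ≠ 0 := sub_ne_zero.mpr hz
  by_cases haz : a = 0
  · left
    by_cases hbz : b = 0
    · constructor <;> [exact sub_eq_zero.mp haz; exact sub_eq_zero.mp hbz]
    · exfalso
      apply hroot (-c / b)
      field_simp [haz]
      rw [haz]; ring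
  · right
    by_contra hle
    push_neg at hle
    have hd : discrim (a / 2) b c = b ^ 2 - 2 * a * c := by
      unfold discrim; ring
    have hdnn : 0 ≤ discrim (a / 2) b c := by rw [hd]; linarith
    obtain ⟨x, hx⟩ := exists_quadratic_eq_zero (div_ne_zero haz two_ne_zero)
      ⟨Real.sqrt (discrim (a/2) b c), (Real.mul_self_sqrt hdnn).symm⟩
    exact hroot x (by rw [← hx]; ring)
end

section
/- Let A, B : ℝ → ℝ be continuous. Suppose for all ζ, ζ' ∈ ℝ either (A(ζ)=A(ζ') and B(ζ)=B(ζ')) or 2(A(ζ)−A(ζ'))(ζ−ζ') > (B(ζ)−B(ζ'))². Then the map Ψ(t,ζ) = (t, A(ζ)t²/2 + B(ζ)t + ζ) is injective. -/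
theorem stmt_1 (A B : ℝ → ℝ) (hA : Continuous A) (hB : Continuous B)
    (hdich : ∀ ζ ζ' : ℝ, (A ζ = A ζ' ∧ B ζ = B ζ') ∨
      2 * (A ζ - A ζ') * (ζ - ζ') > (B ζ - B ζ') ^ 2) :
    Function.Injective (fun p : ℝ × ℝ =>
      (p.1, A p.2 / 2 * p.1 ^ 2 + B p.2 * p.1 + p.2)) := by
  intro p q h
  simp only [Prod.mk.injEq] at h
  obtain ⟨h1, h2⟩ := h
  rw [h1] at h2
  rcases hdich p.2 q.2 with ⟨ha, hb⟩ | hgt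
  · rw [ha, hb] at h2
    have : p.2 = q.2 := by linarith
    exact Prod.ext h1 this
  · exfalso
    have hd : p.2 - q.2 = -(A p.2 - A q.2) / 2 * q.1 ^ 2 - (B p.2 - B q.2) * q.1 := by
      linarith
    have key : 2 * (A p.2 - A q.2) * (p.2 - q.2) =
        -((A p.2 - A q.2) * q.1 + (B p.2 - B q.2)) ^ 2 + (B p.2 - B q.2) ^ 2 := by
      rw [hd]; ring
    have := sq_nonneg ((A p.2 - A q.2) * q.1 + (B p.2 - B q.2))
    linarith
end

section
/- Let A, B : ℝ → ℝ be continuous with A(ζ₀) > 0 for some ζ₀, A non-decreasing, and suppose lim sup_{ζ→∞} (ζ − B(ζ)²/(2A(ζ))) = +∞. Then for every t ∈ ℝ, the function ζ ↦ A(ζ)t²/2 + B(ζ)t + ζ tends to +∞ as ζ → +∞. -/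
open Filter

theorem stmt_3 (A B : ℝ → ℝ) (hA : Continuous A) (hB : Continuous B)
    (ζ₀ : ℝ) (hpos : A ζ₀ > 0) (hmono : Monotone A)
    (hdich : ∀ ζ ζ' : ℝ, (A ζ = A ζ' ∧ B ζ = B ζ') ∨
      2 * (A ζ - A ζ') * (ζ - ζ') > (B ζ - B ζ') ^ 2)
    (hlimsup : ∀ M : ℝ, ∃ᶠ ζ in atTop, ζ - B ζ ^ 2 / (2 * A ζ) > M) :
    ∀ t : ℝ, Tendsto (fun ζ => A ζ * t ^ 2 / 2 + B ζ * t + ζ) atTop atTop := by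
  intro t
  -- monotonicity of g in ζ
  have gmono : ∀ ζ' ζ : ℝ, ζ' ≤ ζ →
      A ζ' * t ^ 2 / 2 + B ζ' * t + ζ' ≤ A ζ * t ^ 2 / 2 + B ζ * t + ζ := by
    intro ζ' ζ hle
    rcases eq_or_lt_of_le hle with rfl | hlt
    · exact le_refl _
    · rcases hdich ζ ζ' with ⟨hAe, hBe⟩ | hq
      · rw [hAe, hBe]; linarith
      · have ha : A ζ - A ζ' ≥ 0 := by linarith [hmono hle]
        nlinarith [sq_nonneg ((A ζ - A ζ') * t + (B ζ - B ζ')), sq_nonneg (B ζ - B ζ')]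
  rw [tendsto_atTop]
  intro M
  obtain ⟨ζ₁, hζ₁ge, hζ₁⟩ := ((hlimsup M).and_eventually (eventually_ge_atTop ζ₀)).exists
  have hApos : 0 < A ζ₁ := lt_of_lt_of_le hpos (hmono hζ₁)
  have hlow : M ≤ A ζ₁ * t ^ 2 / 2 + B ζ₁ * t + ζ₁ := by
    have h1 : A ζ₁ * t ^ 2 / 2 + B ζ₁ * t + B ζ₁ ^ 2 / (2 * A ζ₁) ≥ 0 := by
      have he : A ζ₁ * t ^ 2 / 2 + B ζ₁ * t + B ζ₁ ^ 2 / (2 * A ζ₁)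
          = (A ζ₁ * t + B ζ₁) ^ 2 / (2 * A ζ₁) := by
        field_simp; ring
      rw [he]; positivity
    linarith
  filter_upwards [eventually_ge_atTop ζ₁] with ζ hζ
  exact le_trans hlow (gmono ζ₁ ζ hζ)
end

section
/- Let φ = (φ₁, φ₂) : ℝ² → ℝ² be a smooth diffeomorphism and f ∈ C^∞(ℝ²) with ∇^f φ₁(p) ≠ 0 for all p. In the coordinates where a point of the Heisenberg group is (ξ, η, τ) with frame X̃ = ∂_ξ, Ỹ = ∂_η + ξ∂_τ, Z̃ = ∂_τ, define Φ(ξ, η, τ) = ( (∇^ξφ₂/∇^ξφ₁)(η,τ), φ₁(η,τ), φ₂(η,τ) ) where ∇^ξ = ∂_η + ξ∂_τ. Then ∂_ξ( ∇^ξφ₂/∇^ξφ₁ ) = det(dφ) / (∇^ξφ₁)², which is nonzero, so Φ is a local diffeomorphism on the set where ∇^ξφ₁ ≠ 0. -/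
noncomputable def pd1 (u : ℝ → ℝ → ℝ) (η τ : ℝ) : ℝ := deriv (fun x => u x τ) η

noncomputable def pd2 (u : ℝ → ℝ → ℝ) (η τ : ℝ) : ℝ := deriv (fun y => u η y) τ

/-- The operator `∇^ξ = ∂_η + ξ ∂_τ`, with `ξ` a real parameter. -/
noncomputable def nxi (ξ : ℝ) (u : ℝ → ℝ → ℝ) (η τ : ℝ) : ℝ :=
  pd1 u η τ + ξ * pd2 u η τ

/-- Jacobian determinant of `φ = (φ₁, φ₂)`. -/
noncomputable def jac (φ₁ φ₂ : ℝ → ℝ → ℝ) (η τ : ℝ) : ℝ :=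
  pd1 φ₁ η τ * pd2 φ₂ η τ - pd2 φ₁ η τ * pd1 φ₂ η τ

theorem stmt_15 (φ₁ φ₂ : ℝ → ℝ → ℝ)
    (h₁ : ContDiff ℝ (⊤ : ℕ∞) (Function.uncurry φ₁))
    (h₂ : ContDiff ℝ (⊤ : ℕ∞) (Function.uncurry φ₂))
    (hbij : Function.Bijective (fun p : ℝ × ℝ => (φ₁ p.1 p.2, φ₂ p.1 p.2)))
    (hdet : ∀ η τ : ℝ, jac φ₁ φ₂ η τ ≠ 0) :
    ∀ ξ η τ : ℝ, nxi ξ φ₁ η τ ≠ 0 →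
      HasDerivAt (fun x : ℝ => nxi x φ₂ η τ / nxi x φ₁ η τ)
        (jac φ₁ φ₂ η τ / (nxi ξ φ₁ η τ) ^ 2) ξ
      ∧ jac φ₁ φ₂ η τ / (nxi ξ φ₁ η τ) ^ 2 ≠ 0 := by
  intro ξ η τ hne
  have hN : HasDerivAt (fun x : ℝ => nxi x φ₂ η τ) (pd2 φ₂ η τ) ξ := by
    simpa [nxi] using ((hasDerivAt_id ξ).mul_const (pd2 φ₂ η τ)).const_add (pd1 φ₂ η τ)
  have hD : HasDerivAt (fun x : ℝ => nxi x φ₁ η τ) (pd2 φ₁ η τ) ξ := by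
    simpa [nxi] using ((hasDerivAt_id ξ).mul_const (pd2 φ₁ η τ)).const_add (pd1 φ₁ η τ)
  have h := hN.div hD hne
  have heq : (pd2 φ₂ η τ * nxi ξ φ₁ η τ - nxi ξ φ₂ η τ * pd2 φ₁ η τ) / (nxi ξ φ₁ η τ) ^ 2
      = jac φ₁ φ₂ η τ / (nxi ξ φ₁ η τ) ^ 2 := by
    simp only [nxi, jac]; ring
  refine ⟨heq ▸ h, div_ne_zero (hdet η τ) (pow_ne_zero 2 hne)⟩
end

section
/- With the notation Φ(ξ,η,τ) = ( (∇^ξφ₂/∇^ξφ₁), φ₁, φ₂ ), X̃ = ∂_ξ, Ỹ = ∂_η + ξ∂_τ, we have dΦ(X̃) = ∂_ξ(∇^ξφ₂/∇^ξφ₁)·X̃∘Φ and dΦ(Ỹ) = ∇^ξ(∇^ξφ₂/∇^ξφ₁)·X̃∘Φ + (∇^ξφ₁)·Ỹ∘Φ; hence Φ maps the horizontal distribution span{X̃, Ỹ} into itself (Φ is a contact diffeomorphism). -/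
open Function

/-- The quotient `∇^ξφ₂ / ∇^ξφ₁`. -/
noncomputable def ratio (φ₁ φ₂ : ℝ → ℝ → ℝ) (ξ η τ : ℝ) : ℝ :=
  nxi ξ φ₂ η τ / nxi ξ φ₁ η τ

/-- The lifted map `Φ(ξ,η,τ) = (∇^ξφ₂/∇^ξφ₁, φ₁(η,τ), φ₂(η,τ))`. -/
noncomputable def liftMap (φ₁ φ₂ : ℝ → ℝ → ℝ) (p : ℝ × ℝ × ℝ) : ℝ × ℝ × ℝ :=
  (ratio φ₁ φ₂ p.1 p.2.1 p.2.2, φ₁ p.2.1 p.2.2, φ₂ p.2.1 p.2.2)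

section Aux

variable {u : ℝ → ℝ → ℝ}

lemma hasDerivAt_slice1 (hu : ContDiff ℝ (⊤ : ℕ∞) (uncurry u)) (η τ : ℝ) :
    HasDerivAt (fun x => u x τ) (fderiv ℝ (uncurry u) (η, τ) (1, 0)) η := by
  have hf : HasFDerivAt (uncurry u) (fderiv ℝ (uncurry u) (η, τ)) (η, τ) :=
    (hu.differentiable (by simp) (η, τ)).hasFDerivAt
  have hg : HasDerivAt (fun x : ℝ => (x, τ)) ((1 : ℝ), (0 : ℝ)) η :=
    (hasDerivAt_id η).prodMk (hasDerivAt_const η τ)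
  exact hf.comp_hasDerivAt η hg

lemma hasDerivAt_slice2 (hu : ContDiff ℝ (⊤ : ℕ∞) (uncurry u)) (η τ : ℝ) :
    HasDerivAt (fun y => u η y) (fderiv ℝ (uncurry u) (η, τ) (0, 1)) τ := by
  have hf : HasFDerivAt (uncurry u) (fderiv ℝ (uncurry u) (η, τ)) (η, τ) :=
    (hu.differentiable (by simp) (η, τ)).hasFDerivAt
  have hg : HasDerivAt (fun y : ℝ => (η, y)) ((0 : ℝ), (1 : ℝ)) τ :=
    (hasDerivAt_const τ η).prodMk (hasDerivAt_id τ)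
  exact hf.comp_hasDerivAt τ hg

lemma nxi_eq (hu : ContDiff ℝ (⊤ : ℕ∞) (uncurry u)) (ξ η τ : ℝ) :
    nxi ξ u η τ = fderiv ℝ (uncurry u) (η, τ) (1, ξ) := by
  have h1 := (hasDerivAt_slice1 hu η τ).deriv
  have h2 := (hasDerivAt_slice2 hu η τ).deriv
  have hv : ((1 : ℝ), ξ) = ((1 : ℝ), (0 : ℝ)) + ξ • ((0 : ℝ), (1 : ℝ)) := by
    simp
  rw [nxi, pd1, pd2, h1, h2, hv, map_add, map_smul, smul_eq_mul]

/-- `Nu u p = ∇^{p.1} u (p.2)`, expressed via the full derivative. -/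
noncomputable def Nu (u : ℝ → ℝ → ℝ) (p : ℝ × ℝ × ℝ) : ℝ :=
  fderiv ℝ (uncurry u) p.2 (1, p.1)

lemma contDiff_Nu (hu : ContDiff ℝ (⊤ : ℕ∞) (uncurry u)) : ContDiff ℝ (⊤ : ℕ∞) (Nu u) := by
  have h1 : ContDiff ℝ (⊤ : ℕ∞) (fun p : ℝ × ℝ × ℝ => fderiv ℝ (uncurry u) p.2) :=
    (hu.fderiv_right (by simp)).comp contDiff_snd
  have h2 : ContDiff ℝ (⊤ : ℕ∞) (fun p : ℝ × ℝ × ℝ => ((1 : ℝ), p.1)) :=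
    contDiff_const.prodMk contDiff_fst
  exact h1.clm_apply h2

end Aux

theorem stmt_16 (φ₁ φ₂ : ℝ → ℝ → ℝ)
    (h₁ : ContDiff ℝ (⊤ : ℕ∞) (Function.uncurry φ₁))
    (h₂ : ContDiff ℝ (⊤ : ℕ∞) (Function.uncurry φ₂))
    (hbij : Function.Bijective (fun p : ℝ × ℝ => (φ₁ p.1 p.2, φ₂ p.1 p.2)))
    (hdet : ∀ η τ : ℝ,
      pd1 φ₁ η τ * pd2 φ₂ η τ - pd2 φ₁ η τ * pd1 φ₂ η τ ≠ 0) :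
    ∀ ξ η τ : ℝ, nxi ξ φ₁ η τ ≠ 0 →
      (fderiv ℝ (liftMap φ₁ φ₂) (ξ, η, τ) (1, 0, 0)
          = (deriv (fun x : ℝ => ratio φ₁ φ₂ x η τ) ξ) • ((1, 0, 0) : ℝ × ℝ × ℝ))
      ∧ (fderiv ℝ (liftMap φ₁ φ₂) (ξ, η, τ) (0, 1, ξ)
          = (nxi ξ (fun a b => ratio φ₁ φ₂ ξ a b) η τ) • ((1, 0, 0) : ℝ × ℝ × ℝ)
            + (nxi ξ φ₁ η τ) • ((0, 1, ratio φ₁ φ₂ ξ η τ) : ℝ × ℝ × ℝ))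
      ∧ (∀ v ∈ Submodule.span ℝ ({(1, 0, 0), (0, 1, ξ)} : Set (ℝ × ℝ × ℝ)),
          fderiv ℝ (liftMap φ₁ φ₂) (ξ, η, τ) v
            ∈ Submodule.span ℝ
                ({(1, 0, 0), (0, 1, ratio φ₁ φ₂ ξ η τ)} : Set (ℝ × ℝ × ℝ))) := by
  intro ξ η τ h0
  classical
  set p : ℝ × ℝ × ℝ := (ξ, η, τ) with hp
  -- the quotient function
  set g : ℝ × ℝ × ℝ → ℝ := fun q => Nu φ₂ q / Nu φ₁ q with hgdef
  have hratio : ∀ a b c : ℝ, ratio φ₁ φ₂ a b c = g (a, b, c) := by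
    intro a b c
    simp only [hgdef, ratio, Nu, nxi_eq h₁, nxi_eq h₂]
  have hNu1 : ∀ a b c : ℝ, Nu φ₁ (a, b, c) = nxi a φ₁ b c := by
    intro a b c; rw [nxi_eq h₁]; rfl
  have hNu2 : ∀ a b c : ℝ, Nu φ₂ (a, b, c) = nxi a φ₂ b c := by
    intro a b c; rw [nxi_eq h₂]; rfl
  have hne : Nu φ₁ p ≠ 0 := by rw [hp, hNu1]; exact h0
  -- differentiability of g at p
  have hd2 : DifferentiableAt ℝ (Nu φ₂) p := (contDiff_Nu h₂).differentiable (by simp) p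
  have hd1 : DifferentiableAt ℝ (Nu φ₁) p := (contDiff_Nu h₁).differentiable (by simp) p
  have hgd : DifferentiableAt ℝ g p := by
    rw [hgdef]
    simp only [div_eq_mul_inv]
    exact hd2.mul (hd1.inv hne)
  set Lg := fderiv ℝ g p with hLg
  have hgfd : HasFDerivAt g Lg p := hgd.hasFDerivAt
  set L₁ := fderiv ℝ (uncurry φ₁) (η, τ) with hL₁
  set L₂ := fderiv ℝ (uncurry φ₂) (η, τ) with hL₂
  have h₁fd : HasFDerivAt (uncurry φ₁) L₁ (η, τ) :=
    (h₁.differentiable (by simp) (η, τ)).hasFDerivAt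
  have h₂fd : HasFDerivAt (uncurry φ₂) L₂ (η, τ) :=
    (h₂.differentiable (by simp) (η, τ)).hasFDerivAt
  have hsnd : HasFDerivAt (fun q : ℝ × ℝ × ℝ => q.2)
      (ContinuousLinearMap.snd ℝ ℝ (ℝ × ℝ)) p := hasFDerivAt_snd
  set S := ContinuousLinearMap.snd ℝ ℝ (ℝ × ℝ) with hS
  set L : (ℝ × ℝ × ℝ) →L[ℝ] (ℝ × ℝ × ℝ) :=
    Lg.prod ((L₁.comp S).prod (L₂.comp S)) with hLdef
  have hlift : liftMap φ₁ φ₂ = fun q : ℝ × ℝ × ℝ =>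
      (g q, uncurry φ₁ q.2, uncurry φ₂ q.2) := by
    funext q
    simp only [liftMap, hratio, uncurry]
  have hF : HasFDerivAt (liftMap φ₁ φ₂) L p := by
    rw [hlift, hLdef]
    exact hgfd.prodMk ((h₁fd.comp (g := uncurry φ₁) p hsnd).prodMk (h₂fd.comp (g := uncurry φ₂) p hsnd))
  have hfd := hF.fderiv
  -- directional derivatives of g along the three axes
  have hg1 : HasDerivAt (fun x => g (x, η, τ)) (Lg (1, 0, 0)) ξ := by
    have hc : HasDerivAt (fun x : ℝ => ((x, η, τ) : ℝ × ℝ × ℝ))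
        (((1 : ℝ), (0 : ℝ), (0 : ℝ))) ξ :=
      (hasDerivAt_id ξ).prodMk (hasDerivAt_const ξ ((η, τ) : ℝ × ℝ))
    exact hgfd.comp_hasDerivAt ξ hc
  have hg2 : HasDerivAt (fun a => g (ξ, a, τ)) (Lg (0, 1, 0)) η := by
    have hc : HasDerivAt (fun a : ℝ => ((ξ, a, τ) : ℝ × ℝ × ℝ))
        (((0 : ℝ), (1 : ℝ), (0 : ℝ))) η :=
      (hasDerivAt_const η ξ).prodMk ((hasDerivAt_id η).prodMk (hasDerivAt_const η τ))
    exact hgfd.comp_hasDerivAt η hc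
  have hg3 : HasDerivAt (fun b => g (ξ, η, b)) (Lg (0, 0, 1)) τ := by
    have hc : HasDerivAt (fun b : ℝ => ((ξ, η, b) : ℝ × ℝ × ℝ))
        (((0 : ℝ), (0 : ℝ), (1 : ℝ))) τ :=
      (hasDerivAt_const τ ξ).prodMk ((hasDerivAt_const τ η).prodMk (hasDerivAt_id τ))
    exact hgfd.comp_hasDerivAt τ hc
  -- Claim 1
  have claim1 : fderiv ℝ (liftMap φ₁ φ₂) (ξ, η, τ) (1, 0, 0)
      = (deriv (fun x : ℝ => ratio φ₁ φ₂ x η τ) ξ) • ((1, 0, 0) : ℝ × ℝ × ℝ) := by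
    have hder : deriv (fun x : ℝ => ratio φ₁ φ₂ x η τ) ξ = Lg (1, 0, 0) := by
      have heq : (fun x : ℝ => ratio φ₁ φ₂ x η τ) = fun x => g (x, η, τ) := by
        funext x; exact hratio x η τ
      rw [heq]; exact hg1.deriv
    rw [← hp, hfd, hder, hLdef]
    refine Prod.ext ?_ (Prod.ext ?_ ?_) <;>
      simp [hS, Prod.mk_zero_zero]
  -- nxi of ratio in terms of Lg
  have hnr : nxi ξ (fun a b => ratio φ₁ φ₂ ξ a b) η τ = Lg (0, 1, ξ) := by
    have hr1 : (fun a : ℝ => ratio φ₁ φ₂ ξ a τ) = fun a => g (ξ, a, τ) := by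
      funext a; exact hratio ξ a τ
    have hr2 : (fun b : ℝ => ratio φ₁ φ₂ ξ η b) = fun b => g (ξ, η, b) := by
      funext b; exact hratio ξ η b
    have hv : ((0 : ℝ), (1 : ℝ), ξ)
        = ((0 : ℝ), (1 : ℝ), (0 : ℝ)) + ξ • ((0 : ℝ), (0 : ℝ), (1 : ℝ)) := by
      simp
    rw [nxi, pd1, pd2, hr1, hr2, hg2.deriv, hg3.deriv, hv, map_add, map_smul,
      smul_eq_mul]
  -- Claim 2
  have claim2 : fderiv ℝ (liftMap φ₁ φ₂) (ξ, η, τ) (0, 1, ξ)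
      = (nxi ξ (fun a b => ratio φ₁ φ₂ ξ a b) η τ) • ((1, 0, 0) : ℝ × ℝ × ℝ)
        + (nxi ξ φ₁ η τ) • ((0, 1, ratio φ₁ φ₂ ξ η τ) : ℝ × ℝ × ℝ) := by
    rw [← hp, hfd, hnr]
    have e1 : L₁ (1, ξ) = nxi ξ φ₁ η τ := (nxi_eq h₁ ξ η τ).symm
    have e2 : L₂ (1, ξ) = nxi ξ φ₂ η τ := (nxi_eq h₂ ξ η τ).symm
    have e3 : nxi ξ φ₁ η τ * ratio φ₁ φ₂ ξ η τ = nxi ξ φ₂ η τ := by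
      rw [ratio]; field_simp
    refine Prod.ext ?_ (Prod.ext ?_ ?_)
    · simp [hLdef]
    · simpa [hLdef, hS] using e1
    · simp only [hLdef, ContinuousLinearMap.prod_apply, ContinuousLinearMap.comp_apply]
      simp only [Prod.smul_mk, Prod.mk_add_mk, smul_eq_mul]
      have : S ((0 : ℝ), (1 : ℝ), ξ) = ((1 : ℝ), ξ) := rfl
      rw [this, e2, ← e3]; ring
  refine ⟨claim1, claim2, ?_⟩
  intro v hv
  rw [Submodule.mem_span_pair] at hv
  obtain ⟨a, b, rfl⟩ := hv
  rw [map_add, map_smul, map_smul, claim1, claim2]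
  have hmem1 : ((1, 0, 0) : ℝ × ℝ × ℝ) ∈ Submodule.span ℝ
      ({(1, 0, 0), (0, 1, ratio φ₁ φ₂ ξ η τ)} : Set (ℝ × ℝ × ℝ)) :=
    Submodule.subset_span (by simp)
  have hmem2 : ((0, 1, ratio φ₁ φ₂ ξ η τ) : ℝ × ℝ × ℝ) ∈ Submodule.span ℝ
      ({(1, 0, 0), (0, 1, ratio φ₁ φ₂ ξ η τ)} : Set (ℝ × ℝ × ℝ)) :=
    Submodule.subset_span (by simp)
  exact Submodule.add_mem _
    (Submodule.smul_mem _ _ (Submodule.smul_mem _ _ hmem1))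
    (Submodule.smul_mem _ _ (Submodule.add_mem _
      (Submodule.smul_mem _ _ hmem1) (Submodule.smul_mem _ _ hmem2)))
end

section
/- Let f : ℝ² → ℝ be continuous such that for every p = (0, ζ) the curve t ↦ (t, g(t, ζ)) with g(t, ζ) = (a(ζ)/2)t² + b(ζ)t + ζ satisfies ∂_t g(t,ζ) = f(t, g(t,ζ)) for all t, where a(ζ) := ∇^f f(0, ζ) and b(ζ) := f(0, ζ), and suppose the map (t, ζ) ↦ (t, g(t, ζ)) is a homeomorphism of ℝ² such that for fixed t the map ζ ↦ g(t, ζ) is increasing. If ζ ↦ a(ζ) is non-decreasing, then for each fixed η ∈ ℝ the map τ ↦ ∇^f f(η, τ) is non-decreasing, where ∇^f f(t, g(t,ζ)) = a(ζ). -/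
theorem stmt_17 (f ψ : ℝ → ℝ → ℝ) (a b : ℝ → ℝ)
    (hf : Continuous (Function.uncurry f))
    (g : ℝ → ℝ → ℝ)
    (hg : ∀ t ζ : ℝ, g t ζ = a ζ / 2 * t ^ 2 + b ζ * t + ζ)
    (hint : ∀ t ζ : ℝ, a ζ * t + b ζ = f t (g t ζ))
    (hbij : Function.Bijective (fun p : ℝ × ℝ => (p.1, g p.1 p.2)))
    (hstrict : ∀ t : ℝ, StrictMono (fun ζ => g t ζ))
    (hψ : ∀ t ζ : ℝ, ψ t (g t ζ) = a ζ)
    (hamono : Monotone a) :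
    ∀ η : ℝ, Monotone (fun τ => ψ η τ) := by
  intro η τ₁ τ₂ hle
  obtain ⟨p₁, hp₁⟩ := hbij.2 (η, τ₁)
  obtain ⟨p₂, hp₂⟩ := hbij.2 (η, τ₂)
  obtain ⟨h1a, h1b⟩ := Prod.mk.injEq .. ▸ hp₁
  obtain ⟨h2a, h2b⟩ := Prod.mk.injEq .. ▸ hp₂
  have hzle : p₁.2 ≤ p₂.2 := by
    by_contra h
    push_neg at h
    have := hstrict η h
    simp only at this
    rw [h1a] at h1b; rw [h2a] at h2b
    rw [h1b, h2b] at this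
    linarith
  have e1 : ψ η τ₁ = a p₁.2 := by rw [← h1b, ← h1a]; exact hψ _ _
  have e2 : ψ η τ₂ = a p₂.2 := by rw [← h2b, ← h2a]; exact hψ _ _
  simpa [e1, e2] using hamono hzle
end

section
/- Let f ∈ C^∞(ℝ²) with ψ := ∇^f f satisfying ∇^f ψ = 0, and let V₁ ∈ C_c^∞(ℝ²). Then ∫_{ℝ²} [ ψ/√(1+ψ²)·(6f·∇^fV₁·Δ^fV₁ + 6ψ·(∇^fV₁)²) − 2ψ/√(1+ψ²)·(2ψ∇^fV₁ + fΔ^fV₁)·∂_ηV₁ ] dη dτ = ∫_{ℝ²} ∂_τ(ψ/√(1+ψ²)) · (∇^f(fV₁))² dη dτ. -/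
/-- The intrinsic gradient operator `∇^f = ∂_η + f ∂_τ`. -/
noncomputable def nab (f u : ℝ → ℝ → ℝ) : ℝ → ℝ → ℝ :=
  fun η τ => pd1 u η τ + f η τ * pd2 u η τ

section Toolkit

open Function MeasureTheory

abbrev Sm (u : ℝ → ℝ → ℝ) : Prop := ContDiff ℝ (⊤ : ℕ∞) (Function.uncurry u)

lemma hd1 {u : ℝ → ℝ → ℝ} (hu : Differentiable ℝ (uncurry u)) (η τ : ℝ) :
    HasDerivAt (fun x => u x τ) (fderiv ℝ (uncurry u) (η, τ) (1, 0)) η := by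
  have h1 : HasDerivAt (fun x : ℝ => (x, τ)) ((1 : ℝ), (0 : ℝ)) η :=
    (hasDerivAt_id η).prodMk (hasDerivAt_const η τ)
  exact (hu (η, τ)).hasFDerivAt.comp_hasDerivAt η h1

lemma hd2 {u : ℝ → ℝ → ℝ} (hu : Differentiable ℝ (uncurry u)) (η τ : ℝ) :
    HasDerivAt (fun y => u η y) (fderiv ℝ (uncurry u) (η, τ) (0, 1)) τ := by
  have h1 : HasDerivAt (fun y : ℝ => (η, y)) ((0 : ℝ), (1 : ℝ)) τ :=
    (hasDerivAt_const τ η).prodMk (hasDerivAt_id τ)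
  exact (hu (η, τ)).hasFDerivAt.comp_hasDerivAt τ h1

lemma pd1_eq {u : ℝ → ℝ → ℝ} (hu : Differentiable ℝ (uncurry u)) (η τ : ℝ) :
    pd1 u η τ = fderiv ℝ (uncurry u) (η, τ) (1, 0) := (hd1 hu η τ).deriv

lemma pd2_eq {u : ℝ → ℝ → ℝ} (hu : Differentiable ℝ (uncurry u)) (η τ : ℝ) :
    pd2 u η τ = fderiv ℝ (uncurry u) (η, τ) (0, 1) := (hd2 hu η τ).deriv

lemma Sm.diff {u : ℝ → ℝ → ℝ} (hu : Sm u) : Differentiable ℝ (uncurry u) :=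
  hu.differentiable (by simp)

lemma Sm.hasDerivAt1 {u : ℝ → ℝ → ℝ} (hu : Sm u) (η τ : ℝ) :
    HasDerivAt (fun x => u x τ) (pd1 u η τ) η := by
  rw [pd1_eq hu.diff]; exact hd1 hu.diff η τ

lemma Sm.hasDerivAt2 {u : ℝ → ℝ → ℝ} (hu : Sm u) (η τ : ℝ) :
    HasDerivAt (fun y => u η y) (pd2 u η τ) τ := by
  rw [pd2_eq hu.diff]; exact hd2 hu.diff η τ

lemma Sm.p1 {u : ℝ → ℝ → ℝ} (hu : Sm u) : Sm (pd1 u) := by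
  have h : uncurry (pd1 u) = fun p : ℝ × ℝ => fderiv ℝ (uncurry u) p (1, 0) := by
    funext p; exact pd1_eq hu.diff p.1 p.2
  show ContDiff ℝ (⊤ : ℕ∞) (uncurry (pd1 u))
  rw [h]
  exact (hu.fderiv_right (by simp)).clm_apply contDiff_const

lemma Sm.p2 {u : ℝ → ℝ → ℝ} (hu : Sm u) : Sm (pd2 u) := by
  have h : uncurry (pd2 u) = fun p : ℝ × ℝ => fderiv ℝ (uncurry u) p (0, 1) := by
    funext p; exact pd2_eq hu.diff p.1 p.2
  show ContDiff ℝ (⊤ : ℕ∞) (uncurry (pd2 u))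
  rw [h]
  exact (hu.fderiv_right (by simp)).clm_apply contDiff_const

lemma Sm.nab' {f u : ℝ → ℝ → ℝ} (hf : Sm f) (hu : Sm u) : Sm (nab f u) := by
  have h : uncurry (nab f u) =
      fun p : ℝ × ℝ => uncurry (pd1 u) p + uncurry f p * uncurry (pd2 u) p := rfl
  show ContDiff ℝ (⊤ : ℕ∞) (uncurry (nab f u))
  rw [h]
  exact ContDiff.add hu.p1 (ContDiff.mul hf hu.p2)

/-- Clairaut for `C^∞` functions. -/
lemma pd_comm {u : ℝ → ℝ → ℝ} (hu : Sm u) (η τ : ℝ) :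
    pd1 (pd2 u) η τ = pd2 (pd1 u) η τ := by
  have h1 : uncurry (pd1 u) = fun p : ℝ × ℝ => fderiv ℝ (uncurry u) p (1, 0) := by
    funext p; exact pd1_eq hu.diff p.1 p.2
  have h2 : uncurry (pd2 u) = fun p : ℝ × ℝ => fderiv ℝ (uncurry u) p (0, 1) := by
    funext p; exact pd2_eq hu.diff p.1 p.2
  have hf' : Differentiable ℝ (fderiv ℝ (uncurry u)) :=
    (hu.fderiv_right (m := (⊤ : ℕ∞)) (by simp)).differentiable (by simp)
  have key : ∀ v w : ℝ × ℝ,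
      fderiv ℝ (fun p : ℝ × ℝ => fderiv ℝ (uncurry u) p v) (η, τ) w
        = fderiv ℝ (fderiv ℝ (uncurry u)) (η, τ) w v := by
    intro v w
    rw [fderiv_clm_apply (hf' (η, τ)) (differentiableAt_const v)]
    simp
  have e1 : pd1 (pd2 u) η τ
      = fderiv ℝ (fderiv ℝ (uncurry u)) (η, τ) (1, 0) (0, 1) := by
    rw [pd1_eq hu.p2.diff, h2, key]
  have e2 : pd2 (pd1 u) η τ
      = fderiv ℝ (fderiv ℝ (uncurry u)) (η, τ) (0, 1) (1, 0) := by
    rw [pd2_eq hu.p1.diff, h1, key]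
  rw [e1, e2]
  exact (hu.contDiffAt.isSymmSndFDerivAt (by rw [minSmoothness_of_isRCLikeNormedField]; exact WithTop.coe_le_coe.mpr le_top)).eq _ _

lemma integral_deriv_zero {g : ℝ → ℝ} (hg : ContDiff ℝ 1 g) (hs : HasCompactSupport g) :
    ∫ x, deriv g x = 0 := by
  have h1 := hs.integral_Ioi_deriv_eq hg 0
  have h2 := hs.integral_Iic_deriv_eq hg 0
  have hint : Integrable (deriv g) :=
    ((hg.continuous_deriv le_rfl).integrable_of_hasCompactSupport hs.deriv)
  rw [← intervalIntegral.integral_Iic_add_Ioi (b := 0) hint.integrableOn hint.integrableOn,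
    h1, h2]
  ring

lemma slice1_contDiff {A : ℝ → ℝ → ℝ} (hA : Sm A) (τ : ℝ) :
    ContDiff ℝ 1 (fun x => A x τ) := by
  have h : (fun x => A x τ) = uncurry A ∘ (fun x : ℝ => (x, τ)) := rfl
  rw [h]
  exact (hA.of_le (by simp)).comp (contDiff_id.prodMk contDiff_const)

lemma slice2_contDiff {A : ℝ → ℝ → ℝ} (hA : Sm A) (η : ℝ) :
    ContDiff ℝ 1 (fun y => A η y) := by
  have h : (fun y => A η y) = uncurry A ∘ (fun y : ℝ => (η, y)) := rfl
  rw [h]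
  exact (hA.of_le (by simp)).comp (contDiff_const.prodMk contDiff_id)

lemma slice1_supp {A : ℝ → ℝ → ℝ} (hs : HasCompactSupport (uncurry A)) (τ : ℝ) :
    HasCompactSupport (fun x => A x τ) := by
  apply HasCompactSupport.intro (hs.image continuous_fst)
  intro x hx
  by_contra h
  exact hx ⟨(x, τ), subset_tsupport _ h, rfl⟩

lemma slice2_supp {A : ℝ → ℝ → ℝ} (hs : HasCompactSupport (uncurry A)) (η : ℝ) :
    HasCompactSupport (fun y => A η y) := by
  apply HasCompactSupport.intro (hs.image continuous_snd)
  intro y hy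
  by_contra h
  exact hy ⟨(η, y), subset_tsupport _ h, rfl⟩

lemma pd1_zero_off {A : ℝ → ℝ → ℝ} {p : ℝ × ℝ} (hp : p ∉ tsupport (uncurry A)) :
    pd1 A p.1 p.2 = 0 := by
  obtain ⟨η, τ⟩ := p
  have hev : ∀ᶠ x in nhds η, A x τ = 0 := by
    have hop : IsOpen (tsupport (uncurry A))ᶜ := (isClosed_tsupport _).isOpen_compl
    have hc : Continuous (fun x : ℝ => (x, τ)) := continuous_id.prodMk continuous_const
    filter_upwards [hc.continuousAt.preimage_mem_nhds (hop.mem_nhds hp)] with x hx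
    exact image_eq_zero_of_notMem_tsupport (f := uncurry A) hx
  show deriv (fun x => A x τ) η = 0
  rw [Filter.EventuallyEq.deriv_eq (f₁ := fun x => A x τ) (f := fun _ => (0:ℝ)) hev]
  simp

lemma pd2_zero_off {A : ℝ → ℝ → ℝ} {p : ℝ × ℝ} (hp : p ∉ tsupport (uncurry A)) :
    pd2 A p.1 p.2 = 0 := by
  obtain ⟨η, τ⟩ := p
  have hev : ∀ᶠ y in nhds τ, A η y = 0 := by
    have hop : IsOpen (tsupport (uncurry A))ᶜ := (isClosed_tsupport _).isOpen_compl
    have hc : Continuous (fun y : ℝ => (η, y)) := continuous_const.prodMk continuous_id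
    filter_upwards [hc.continuousAt.preimage_mem_nhds (hop.mem_nhds hp)] with y hy
    exact image_eq_zero_of_notMem_tsupport (f := uncurry A) hy
  show deriv (fun y => A η y) τ = 0
  rw [Filter.EventuallyEq.deriv_eq (f₁ := fun y => A η y) (f := fun _ => (0:ℝ)) hev]
  simp

lemma pd1_supp {A : ℝ → ℝ → ℝ} (hs : HasCompactSupport (uncurry A)) :
    HasCompactSupport (uncurry (pd1 A)) :=
  HasCompactSupport.intro hs fun _ hp => pd1_zero_off hp

lemma pd2_supp {A : ℝ → ℝ → ℝ} (hs : HasCompactSupport (uncurry A)) :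
    HasCompactSupport (uncurry (pd2 A)) :=
  HasCompactSupport.intro hs fun _ hp => pd2_zero_off hp

lemma integral_pd1_zero {A : ℝ → ℝ → ℝ} (hA : Sm A) (hs : HasCompactSupport (uncurry A)) :
    ∫ p : ℝ × ℝ, pd1 A p.1 p.2 = 0 := by
  have hint : Integrable (uncurry (pd1 A)) :=
    (hA.p1.continuous).integrable_of_hasCompactSupport (pd1_supp hs)
  have h : ∫ p : ℝ × ℝ, pd1 A p.1 p.2 = ∫ τ, ∫ η, pd1 A η τ := by
    rw [show (volume : Measure (ℝ × ℝ)) = volume.prod volume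
      from (Measure.volume_eq_prod _ _).symm] at hint ⊢
    exact MeasureTheory.integral_prod_symm _ hint
  rw [h]
  have h0 : ∀ τ : ℝ, (∫ η, pd1 A η τ) = 0 := fun τ =>
    integral_deriv_zero (slice1_contDiff hA τ) (slice1_supp hs τ)
  simp [h0]

lemma integral_pd2_zero {A : ℝ → ℝ → ℝ} (hA : Sm A) (hs : HasCompactSupport (uncurry A)) :
    ∫ p : ℝ × ℝ, pd2 A p.1 p.2 = 0 := by
  have hint : Integrable (uncurry (pd2 A)) :=
    (hA.p2.continuous).integrable_of_hasCompactSupport (pd2_supp hs)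
  have h : ∫ p : ℝ × ℝ, pd2 A p.1 p.2 = ∫ η, ∫ τ, pd2 A η τ := by
    rw [show (volume : Measure (ℝ × ℝ)) = volume.prod volume
      from (Measure.volume_eq_prod _ _).symm] at hint ⊢
    exact MeasureTheory.integral_prod _ hint
  rw [h]
  have h0 : ∀ η : ℝ, (∫ τ, pd2 A η τ) = 0 := fun η =>
    integral_deriv_zero (slice2_contDiff hA η) (slice2_supp hs η)
  simp [h0]

end Toolkit

/-- `W = ψ/√(1+ψ²)` -/
noncomputable def wF (f : ℝ → ℝ → ℝ) : ℝ → ℝ → ℝ :=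
  fun a b => nab f f a b / Real.sqrt (1 + (nab f f a b) ^ 2)

noncomputable def AA (f V : ℝ → ℝ → ℝ) : ℝ → ℝ → ℝ := fun a b =>
  2 * wF f a b * f a b * nab f V a b ^ 2
    + 2 * wF f a b * f a b ^ 2 * nab f V a b * pd2 V a b
    - f a b * pd2 (wF f) a b * nab f f a b * V a b ^ 2

noncomputable def BB (f V : ℝ → ℝ → ℝ) : ℝ → ℝ → ℝ := fun a b =>
  wF f a b * f a b ^ 2 * nab f V a b ^ 2
    + 2 * wF f a b * f a b ^ 3 * nab f V a b * pd2 V a b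
    - pd2 (wF f) a b * nab f f a b * f a b ^ 2 * V a b ^ 2
open Function MeasureTheory in
theorem stmt_19 (f V₁ : ℝ → ℝ → ℝ)
    (hf : ContDiff ℝ (⊤ : ℕ∞) (Function.uncurry f))
    (hmin : ∀ η τ : ℝ, nab f (nab f f) η τ = 0)
    (hV : ContDiff ℝ (⊤ : ℕ∞) (Function.uncurry V₁))
    (hsupp : HasCompactSupport (Function.uncurry V₁)) :
    (∫ p : ℝ × ℝ,
        (nab f f p.1 p.2 / Real.sqrt (1 + (nab f f p.1 p.2) ^ 2)
            * (6 * f p.1 p.2 * nab f V₁ p.1 p.2 * nab f (nab f V₁) p.1 p.2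
              + 6 * nab f f p.1 p.2 * (nab f V₁ p.1 p.2) ^ 2)
          - 2 * (nab f f p.1 p.2 / Real.sqrt (1 + (nab f f p.1 p.2) ^ 2))
            * (2 * nab f f p.1 p.2 * nab f V₁ p.1 p.2
                + f p.1 p.2 * nab f (nab f V₁) p.1 p.2)
            * pd1 V₁ p.1 p.2))
      = ∫ p : ℝ × ℝ,
          pd2 (fun a b => nab f f a b / Real.sqrt (1 + (nab f f a b) ^ 2)) p.1 p.2
            * (nab f (fun a b => f a b * V₁ a b) p.1 p.2) ^ 2 := by
  have hSf : Sm f := hf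
  have hSV : Sm V₁ := hV
  have hSψ : Sm (nab f f) := hSf.nab' hSf
  have hSg : Sm (nab f V₁) := hSf.nab' hSV
  set φ : ℝ → ℝ := fun t => t / Real.sqrt (1 + t ^ 2) with hφdef
  have hφ : ContDiff ℝ (⊤ : ℕ∞) φ := by
    apply ContDiff.div contDiff_id
      ((contDiff_const.add (contDiff_id.pow 2)).sqrt (fun t => by positivity))
    intro t
    exact (Real.sqrt_ne_zero'.mpr (by positivity))
  have hSw : Sm (wF f) := by
    show ContDiff ℝ (⊤ : ℕ∞) (uncurry (wF f))
    have e : uncurry (wF f) = φ ∘ uncurry (nab f f) := rfl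
    rw [e]
    exact hφ.comp hSψ
  -- pointwise relations
  have hm : ∀ a b : ℝ, pd1 (nab f f) a b = -f a b * pd2 (nab f f) a b := by
    intro a b
    have h := hmin a b
    simp only [nab] at h
    linarith
  have hwr : ∀ a b : ℝ, pd1 (wF f) a b = -f a b * pd2 (wF f) a b := by
    intro a b
    have hφd : Differentiable ℝ φ := hφ.differentiable (by simp)
    have c1 : pd1 (wF f) a b = deriv φ (nab f f a b) * pd1 (nab f f) a b :=
      by have := ((hφd (nab f f a b)).hasDerivAt.comp a (hSψ.hasDerivAt1 a b)).deriv; exact this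
    have c2 : pd2 (wF f) a b = deriv φ (nab f f a b) * pd2 (nab f f) a b :=
      by have := ((hφd (nab f f a b)).hasDerivAt.comp b (hSψ.hasDerivAt2 a b)).deriv; exact this
    rw [c1, c2, hm a b]
    ring
  have hw21 : ∀ a b : ℝ, pd1 (pd2 (wF f)) a b
      = -pd2 f a b * pd2 (wF f) a b + -f a b * pd2 (pd2 (wF f)) a b := by
    intro a b
    rw [pd_comm hSw a b]
    have hfun : pd1 (wF f) = fun a b => -f a b * pd2 (wF f) a b :=
      funext fun a => funext fun b => hwr a b
    rw [hfun]
    have e : pd2 (fun a b => -f a b * pd2 (wF f) a b) a b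
        = -pd2 f a b * pd2 (wF f) a b + -f a b * pd2 (pd2 (wF f)) a b :=
      ((hSf.hasDerivAt2 a b).neg.mul (hSw.p2.hasDerivAt2 a b)).deriv
    exact e
  have hg1 : ∀ a b : ℝ, pd1 (nab f V₁) a b
      = pd1 (pd1 V₁) a b + (pd1 f a b * pd2 V₁ a b + f a b * pd2 (pd1 V₁) a b) := by
    intro a b
    have e : pd1 (nab f V₁) a b
        = pd1 (pd1 V₁) a b + (pd1 f a b * pd2 V₁ a b + f a b * pd1 (pd2 V₁) a b) :=
      ((hSV.p1.hasDerivAt1 a b).add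
        ((hSf.hasDerivAt1 a b).mul (hSV.p2.hasDerivAt1 a b))).deriv
    rw [e, pd_comm hSV a b]
  have hg2 : ∀ a b : ℝ, pd2 (nab f V₁) a b
      = pd2 (pd1 V₁) a b + (pd2 f a b * pd2 V₁ a b + f a b * pd2 (pd2 V₁) a b) := by
    intro a b
    exact ((hSV.p1.hasDerivAt2 a b).add
      ((hSf.hasDerivAt2 a b).mul (hSV.p2.hasDerivAt2 a b))).deriv
  have hfV1 : ∀ a b : ℝ, pd1 (fun a b => f a b * V₁ a b) a b
      = pd1 f a b * V₁ a b + f a b * pd1 V₁ a b := by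
    intro a b
    exact ((hSf.hasDerivAt1 a b).mul (hSV.hasDerivAt1 a b)).deriv
  have hfV2 : ∀ a b : ℝ, pd2 (fun a b => f a b * V₁ a b) a b
      = pd2 f a b * V₁ a b + f a b * pd2 V₁ a b := by
    intro a b
    exact ((hSf.hasDerivAt2 a b).mul (hSV.hasDerivAt2 a b)).deriv
  have eA : ∀ a b : ℝ, pd1 (AA f V₁) a b =
      2 * (pd1 (wF f) a b * f a b + wF f a b * pd1 f a b) * nab f V₁ a b ^ 2
      + 2 * wF f a b * f a b * (2 * nab f V₁ a b * pd1 (nab f V₁) a b)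
      + (2 * (pd1 (wF f) a b * f a b ^ 2 + wF f a b * (2 * f a b * pd1 f a b))
          * nab f V₁ a b * pd2 V₁ a b
        + 2 * wF f a b * f a b ^ 2
          * (pd1 (nab f V₁) a b * pd2 V₁ a b + nab f V₁ a b * pd1 (pd2 V₁) a b))
      - ((pd1 f a b * pd2 (wF f) a b * nab f f a b
            + f a b * pd1 (pd2 (wF f)) a b * nab f f a b
            + f a b * pd2 (wF f) a b * pd1 (nab f f) a b) * V₁ a b ^ 2
        + f a b * pd2 (wF f) a b * nab f f a b * (2 * V₁ a b * pd1 V₁ a b)) := by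
    intro a b
    have Hw := hSw.hasDerivAt1 a b
    have Hf := hSf.hasDerivAt1 a b
    have Hg := hSg.hasDerivAt1 a b
    have HV := hSV.hasDerivAt1 a b
    have HV2 := hSV.p2.hasDerivAt1 a b
    have Hw2 := hSw.p2.hasDerivAt1 a b
    have Hp := hSψ.hasDerivAt1 a b
    have h0 := ((((Hw.const_mul 2).mul Hf).mul (Hg.pow 2)).add
        ((((Hw.const_mul 2).mul (Hf.pow 2)).mul Hg).mul HV2)).sub
        (((Hf.mul Hw2).mul Hp).mul (HV.pow 2))
    have h1 : HasDerivAt (fun x => AA f V₁ x b)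
        (2 * (pd1 (wF f) a b * f a b + wF f a b * pd1 f a b) * nab f V₁ a b ^ 2
        + 2 * wF f a b * f a b * (2 * nab f V₁ a b * pd1 (nab f V₁) a b)
        + (2 * (pd1 (wF f) a b * f a b ^ 2 + wF f a b * (2 * f a b * pd1 f a b))
            * nab f V₁ a b * pd2 V₁ a b
          + 2 * wF f a b * f a b ^ 2
            * (pd1 (nab f V₁) a b * pd2 V₁ a b + nab f V₁ a b * pd1 (pd2 V₁) a b))
        - ((pd1 f a b * pd2 (wF f) a b * nab f f a b
              + f a b * pd1 (pd2 (wF f)) a b * nab f f a b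
              + f a b * pd2 (wF f) a b * pd1 (nab f f) a b) * V₁ a b ^ 2
          + f a b * pd2 (wF f) a b * nab f f a b * (2 * V₁ a b * pd1 V₁ a b))) a := by
      convert h0 using 1
      all_goals first | rfl | (simp only [Pi.mul_apply, Pi.pow_apply]; ring1) | ring
    exact h1.deriv
  have eB : ∀ a b : ℝ, pd2 (BB f V₁) a b =
      (pd2 (wF f) a b * f a b ^ 2 + wF f a b * (2 * f a b * pd2 f a b)) * nab f V₁ a b ^ 2
      + wF f a b * f a b ^ 2 * (2 * nab f V₁ a b * pd2 (nab f V₁) a b)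
      + (2 * (pd2 (wF f) a b * f a b ^ 3 + wF f a b * (3 * f a b ^ 2 * pd2 f a b))
          * nab f V₁ a b * pd2 V₁ a b
        + 2 * wF f a b * f a b ^ 3
          * (pd2 (nab f V₁) a b * pd2 V₁ a b + nab f V₁ a b * pd2 (pd2 V₁) a b))
      - ((pd2 (pd2 (wF f)) a b * nab f f a b * f a b ^ 2
            + pd2 (wF f) a b * pd2 (nab f f) a b * f a b ^ 2
            + pd2 (wF f) a b * nab f f a b * (2 * f a b * pd2 f a b)) * V₁ a b ^ 2
        + pd2 (wF f) a b * nab f f a b * f a b ^ 2 * (2 * V₁ a b * pd2 V₁ a b)) := by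
    intro a b
    have Hw := hSw.hasDerivAt2 a b
    have Hf := hSf.hasDerivAt2 a b
    have Hg := hSg.hasDerivAt2 a b
    have HV := hSV.hasDerivAt2 a b
    have HV2 := hSV.p2.hasDerivAt2 a b
    have Hw2 := hSw.p2.hasDerivAt2 a b
    have Hp := hSψ.hasDerivAt2 a b
    have h0 := (((Hw.mul (Hf.pow 2)).mul (Hg.pow 2)).add
        ((((Hw.const_mul 2).mul (Hf.pow 3)).mul Hg).mul HV2)).sub
        (((Hw2.mul Hp).mul (Hf.pow 2)).mul (HV.pow 2))
    have h1 : HasDerivAt (fun y => BB f V₁ a y)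
        ((pd2 (wF f) a b * f a b ^ 2 + wF f a b * (2 * f a b * pd2 f a b)) * nab f V₁ a b ^ 2
        + wF f a b * f a b ^ 2 * (2 * nab f V₁ a b * pd2 (nab f V₁) a b)
        + (2 * (pd2 (wF f) a b * f a b ^ 3 + wF f a b * (3 * f a b ^ 2 * pd2 f a b))
            * nab f V₁ a b * pd2 V₁ a b
          + 2 * wF f a b * f a b ^ 3
            * (pd2 (nab f V₁) a b * pd2 V₁ a b + nab f V₁ a b * pd2 (pd2 V₁) a b))
        - ((pd2 (pd2 (wF f)) a b * nab f f a b * f a b ^ 2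
              + pd2 (wF f) a b * pd2 (nab f f) a b * f a b ^ 2
              + pd2 (wF f) a b * nab f f a b * (2 * f a b * pd2 f a b)) * V₁ a b ^ 2
          + pd2 (wF f) a b * nab f f a b * f a b ^ 2 * (2 * V₁ a b * pd2 V₁ a b))) b := by
      convert h0 using 1
      all_goals first | rfl | (simp only [Pi.mul_apply, Pi.pow_apply]; ring1) | ring
    exact h1.deriv
  have hSA : Sm (AA f V₁) := by
    show ContDiff ℝ (⊤ : ℕ∞) (uncurry (AA f V₁))
    have e : uncurry (AA f V₁) = fun p : ℝ × ℝ =>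
        2 * uncurry (wF f) p * uncurry f p * uncurry (nab f V₁) p ^ 2
        + 2 * uncurry (wF f) p * uncurry f p ^ 2 * uncurry (nab f V₁) p * uncurry (pd2 V₁) p
        - uncurry f p * uncurry (pd2 (wF f)) p * uncurry (nab f f) p * uncurry V₁ p ^ 2 := rfl
    rw [e]
    exact ((((contDiff_const.mul hSw).mul hSf).mul (hSg.pow 2)).add
      ((((contDiff_const.mul hSw).mul (hSf.pow 2)).mul hSg).mul hSV.p2)).sub
      (((hSf.mul hSw.p2).mul hSψ).mul (hSV.pow 2))
  have hSB : Sm (BB f V₁) := by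
    show ContDiff ℝ (⊤ : ℕ∞) (uncurry (BB f V₁))
    have e : uncurry (BB f V₁) = fun p : ℝ × ℝ =>
        uncurry (wF f) p * uncurry f p ^ 2 * uncurry (nab f V₁) p ^ 2
        + 2 * uncurry (wF f) p * uncurry f p ^ 3 * uncurry (nab f V₁) p * uncurry (pd2 V₁) p
        - uncurry (pd2 (wF f)) p * uncurry (nab f f) p * uncurry f p ^ 2 * uncurry V₁ p ^ 2 := rfl
    rw [e]
    exact (((hSw.mul (hSf.pow 2)).mul (hSg.pow 2)).add
      ((((contDiff_const.mul hSw).mul (hSf.pow 3)).mul hSg).mul hSV.p2)).sub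
      (((hSw.p2.mul hSψ).mul (hSf.pow 2)).mul (hSV.pow 2))
  have hsA : HasCompactSupport (uncurry (AA f V₁)) := by
    apply HasCompactSupport.intro hsupp
    intro p hp
    have h1 : pd1 V₁ p.1 p.2 = 0 := pd1_zero_off hp
    have h2 : pd2 V₁ p.1 p.2 = 0 := pd2_zero_off hp
    have h0 : V₁ p.1 p.2 = 0 := image_eq_zero_of_notMem_tsupport (f := uncurry V₁) hp
    show AA f V₁ p.1 p.2 = 0
    simp only [AA, nab, h1, h2, h0]
    ring
  have hsB : HasCompactSupport (uncurry (BB f V₁)) := by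
    apply HasCompactSupport.intro hsupp
    intro p hp
    have h1 : pd1 V₁ p.1 p.2 = 0 := pd1_zero_off hp
    have h2 : pd2 V₁ p.1 p.2 = 0 := pd2_zero_off hp
    have h0 : V₁ p.1 p.2 = 0 := image_eq_zero_of_notMem_tsupport (f := uncurry V₁) hp
    show BB f V₁ p.1 p.2 = 0
    simp only [BB, nab, h1, h2, h0]
    ring
  have hiA : Integrable (fun p : ℝ × ℝ => pd1 (AA f V₁) p.1 p.2) :=
    (hSA.p1.continuous).integrable_of_hasCompactSupport (pd1_supp hsA)
  have hiB : Integrable (fun p : ℝ × ℝ => pd2 (BB f V₁) p.1 p.2) :=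
    (hSB.p2.continuous).integrable_of_hasCompactSupport (pd2_supp hsB)
  have hSfV : Sm (fun a b => f a b * V₁ a b) := by
    show ContDiff ℝ (⊤ : ℕ∞) (uncurry fun a b => f a b * V₁ a b)
    have e : uncurry (fun a b => f a b * V₁ a b)
        = fun p : ℝ × ℝ => uncurry f p * uncurry V₁ p := rfl
    rw [e]
    exact hSf.mul hSV
  have hsubfV : tsupport (uncurry fun a b => f a b * V₁ a b) ⊆ tsupport (uncurry V₁) := by
    apply closure_mono
    intro q hq
    simp only [Function.mem_support] at hq ⊢
    intro h0
    apply hq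
    show f q.1 q.2 * V₁ q.1 q.2 = 0
    rw [show V₁ q.1 q.2 = 0 from h0, mul_zero]
  have hiR : Integrable (fun p : ℝ × ℝ =>
      pd2 (wF f) p.1 p.2 * nab f (fun a b => f a b * V₁ a b) p.1 p.2 ^ 2) := by
    apply Continuous.integrable_of_hasCompactSupport
    · exact (hSw.p2.continuous).mul (((hSf.nab' hSfV).continuous).pow 2)
    · apply HasCompactSupport.intro hsupp
      intro p hp
      have hp' : p ∉ tsupport (uncurry fun a b => f a b * V₁ a b) := fun h => hp (hsubfV h)
      have h1 : pd1 (fun a b => f a b * V₁ a b) p.1 p.2 = 0 := pd1_zero_off hp'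
      have h2 : pd2 (fun a b => f a b * V₁ a b) p.1 p.2 = 0 := pd2_zero_off hp'
      show pd2 (wF f) p.1 p.2 * nab f (fun a b => f a b * V₁ a b) p.1 p.2 ^ 2 = 0
      simp only [nab, h1, h2]
      ring
  have hwe : ∀ a b : ℝ, nab f f a b / Real.sqrt (1 + (nab f f a b) ^ 2) = wF f a b :=
    fun _ _ => rfl
  have key : ∀ p : ℝ × ℝ,
      (nab f f p.1 p.2 / Real.sqrt (1 + (nab f f p.1 p.2) ^ 2)
          * (6 * f p.1 p.2 * nab f V₁ p.1 p.2 * nab f (nab f V₁) p.1 p.2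
            + 6 * nab f f p.1 p.2 * (nab f V₁ p.1 p.2) ^ 2)
        - 2 * (nab f f p.1 p.2 / Real.sqrt (1 + (nab f f p.1 p.2) ^ 2))
          * (2 * nab f f p.1 p.2 * nab f V₁ p.1 p.2
              + f p.1 p.2 * nab f (nab f V₁) p.1 p.2)
          * pd1 V₁ p.1 p.2)
      = pd2 (wF f) p.1 p.2 * nab f (fun a b => f a b * V₁ a b) p.1 p.2 ^ 2
        + pd1 (AA f V₁) p.1 p.2 + pd2 (BB f V₁) p.1 p.2 := by
    intro p
    rw [hwe p.1 p.2, eA p.1 p.2, eB p.1 p.2]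
    simp only [nab]
    rw [hfV1 p.1 p.2, hfV2 p.1 p.2, hg1 p.1 p.2, hg2 p.1 p.2, hm p.1 p.2,
      hwr p.1 p.2, hw21 p.1 p.2, pd_comm hSV p.1 p.2]
    ring
  have step1 : (∫ p : ℝ × ℝ,
        (nab f f p.1 p.2 / Real.sqrt (1 + (nab f f p.1 p.2) ^ 2)
            * (6 * f p.1 p.2 * nab f V₁ p.1 p.2 * nab f (nab f V₁) p.1 p.2
              + 6 * nab f f p.1 p.2 * (nab f V₁ p.1 p.2) ^ 2)
          - 2 * (nab f f p.1 p.2 / Real.sqrt (1 + (nab f f p.1 p.2) ^ 2))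
            * (2 * nab f f p.1 p.2 * nab f V₁ p.1 p.2
                + f p.1 p.2 * nab f (nab f V₁) p.1 p.2)
            * pd1 V₁ p.1 p.2))
      = ∫ p : ℝ × ℝ,
          (pd2 (wF f) p.1 p.2 * nab f (fun a b => f a b * V₁ a b) p.1 p.2 ^ 2
            + pd1 (AA f V₁) p.1 p.2 + pd2 (BB f V₁) p.1 p.2) :=
    integral_congr_ae (Filter.Eventually.of_forall key)
  have e1 : (∫ p : ℝ × ℝ,
        (pd2 (wF f) p.1 p.2 * nab f (fun a b => f a b * V₁ a b) p.1 p.2 ^ 2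
          + pd1 (AA f V₁) p.1 p.2 + pd2 (BB f V₁) p.1 p.2))
      = (∫ p : ℝ × ℝ,
          (pd2 (wF f) p.1 p.2 * nab f (fun a b => f a b * V₁ a b) p.1 p.2 ^ 2
            + pd1 (AA f V₁) p.1 p.2))
        + ∫ p : ℝ × ℝ, pd2 (BB f V₁) p.1 p.2 :=
    MeasureTheory.integral_add (hiR.add hiA) hiB
  have e2 : (∫ p : ℝ × ℝ,
        (pd2 (wF f) p.1 p.2 * nab f (fun a b => f a b * V₁ a b) p.1 p.2 ^ 2
          + pd1 (AA f V₁) p.1 p.2))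
      = (∫ p : ℝ × ℝ,
          pd2 (wF f) p.1 p.2 * nab f (fun a b => f a b * V₁ a b) p.1 p.2 ^ 2)
        + ∫ p : ℝ × ℝ, pd1 (AA f V₁) p.1 p.2 :=
    MeasureTheory.integral_add hiR hiA
  rw [step1, e1, e2, integral_pd1_zero hSA hsA, integral_pd2_zero hSB hsB,
    add_zero, add_zero]
  rfl
end
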